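/- Let Q be a commutative unital quantale and let Σ be the set of finitely generated proper ideals of Q with the quantale topology. If Σ is quasi-compact, then every maximal ideal of Q is finitely generated (i.e., Max(Q) ⊆ Σ). -/

import Mathlib

namespace QuantalePaper

/-- An ideal of a complete lattice: nonempty, downward closed, closed under binary joins. -/
structure QIdeal (Q : Type*) [CompleteLattice Q] where
  carrier : Set Q
  nonempty' : carrier.Nonempty
  sup_mem' : ∀ ⦃x⦄, x ∈ carrier → ∀ ⦃y⦄, y ∈ carrier → x ⊔ y ∈ carrier
  lower' : ∀ ⦃x⦄, x ∈ carrier → ∀ ⦃l : Q⦄, l ≤ x → l ∈ carrier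

namespace QIdeal

variable {Q : Type*} [CompleteLattice Q]

instance : SetLike (QIdeal Q) Q where
  coe := carrier
  coe_injective := by rintro ⟨a,_,_,_⟩ ⟨b,_,_,_⟩ h; simpa using h

instance : PartialOrder (QIdeal Q) := .ofSetLike (QIdeal Q) Q

/-- A proper ideal. -/
def IsProper (I : QIdeal Q) : Prop := (⊤ : Q) ∉ I

/-- A maximal ideal: a proper ideal maximal among proper ideals. -/
def IsMaximal (I : QIdeal Q) : Prop :=
  I.IsProper ∧ ∀ J : QIdeal Q, J.IsProper → I ≤ J → J = I

/-- A prime ideal. -/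
def IsPrime [Mul Q] (I : QIdeal Q) : Prop :=
  I.IsProper ∧ ∀ x y : Q, x * y ∈ I → x ∈ I ∨ y ∈ I

end QIdeal

variable {Q : Type*} [CompleteLattice Q]

/-- The subbasic closed set `I↑ ∩ Σ` inside the subtype of a class `S` of ideals. -/
def up (S : Set (QIdeal Q)) (I : QIdeal Q) : Set ↥S := {J : ↥S | (I : Set Q) ⊆ (J : QIdeal Q)}

/-- The quantale topology on a class `S` of ideals, generated by the sets `up S I`
as a subbasis of closed sets. -/
def qTop (S : Set (QIdeal Q)) : TopologicalSpace ↥S :=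
  .generateFrom {U | ∃ I : QIdeal Q, U = (up S I)ᶜ}

/-- `X↑` for a set `X` of ideals: members of `S` containing the intersection `⋀X`,
with `∅↑ = ∅`. -/
def upSet (S : Set (QIdeal Q)) (X : Set (QIdeal Q)) : Set ↥S :=
  {J : ↥S | X.Nonempty ∧ ∀ x : Q, (∀ I ∈ X, x ∈ I) → x ∈ (J : QIdeal Q)}

/-- A finitely generated ideal: generated by a finite subset `T`, i.e. consisting of the
elements below finite joins of elements of `Q & T`. -/
def IsFG [Mul Q] (I : QIdeal Q) : Prop :=
  ∃ T : Finset Q, ∀ x : Q, x ∈ I ↔ ∃ F : Finset Q,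
    (∀ a ∈ F, ∃ q : Q, ∃ s ∈ T, a = q * s) ∧ x ≤ F.sup id

/-! For `x ∈ M` the closed sets `(↓x)↑ ∩ Σ` have the finite intersection property: finitely many
of them all contain `↓b`, where `b ∈ M` bounds the finitely many `x`, and `↓b ∈ Σ` because `b ≠ ⊤`.
Compactness then yields `J ∈ Σ` containing `M`, and maximality forces `J = M`. -/

def princ (t : Q) : QIdeal Q where
  carrier := {y | y ≤ t}
  nonempty' := ⟨t, le_rfl⟩
  sup_mem' := fun _ hx _ hy => sup_le hx hy
  lower' := fun _ hx _ hl => hl.trans hx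

lemma mem_princ {t x : Q} : x ∈ princ t ↔ x ≤ t := Iff.rfl

lemma princ_le_iff {t : Q} {I : QIdeal Q} : princ t ≤ I ↔ t ∈ I :=
  ⟨fun h => h le_rfl, fun ht _ hx => I.lower' ht hx⟩

lemma isProper_princ_iff {t : Q} : (princ t).IsProper ↔ t ≠ ⊤ := by
  simp only [QIdeal.IsProper, mem_princ, top_le_iff]

lemma isFG_princ [Monoid Q] [IsQuantale Q] (htop : (1 : Q) = ⊤) (t : Q) :
    IsFG (princ t) := by
  refine ⟨{t}, fun x => ⟨fun hx => ⟨{t}, ?_, by simpa using mem_princ.1 hx⟩, ?_⟩⟩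
  · simp only [Finset.mem_singleton, exists_eq_left, forall_eq]
    exact ⟨1, (one_mul t).symm⟩
  · rintro ⟨F, hF, hx⟩
    refine hx.trans (Finset.sup_le fun a ha => ?_)
    obtain ⟨q, s, hs, rfl⟩ := hF a ha
    rw [Finset.mem_singleton.1 hs]
    calc q * t ≤ 1 * t := mul_le_mul_left (htop ▸ le_top) t
      _ = t := one_mul t

namespace QIdeal

lemma exists_mem_forall_le_of_finset (I : QIdeal Q) (u : Finset I) :
    ∃ b ∈ I, ∀ x ∈ u, (x : Q) ≤ b := by
  classical
  induction u using Finset.induction with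
  | empty =>
    obtain ⟨b, hb⟩ := I.nonempty'
    exact ⟨b, hb, by simp⟩
  | insert a u _ ih =>
    obtain ⟨b, hb, hub⟩ := ih
    refine ⟨a ⊔ b, I.sup_mem' a.2 hb, ?_⟩
    simp only [Finset.mem_insert, forall_eq_or_imp]
    exact ⟨le_sup_left, fun x hx => (hub x hx).trans le_sup_right⟩

end QIdeal

lemma isClosed_up (S : Set (QIdeal Q)) (I : QIdeal Q) : @IsClosed ↥S (qTop S) (up S I) := by
  let := qTop S
  exact isOpen_compl_iff.1 (TopologicalSpace.isOpen_generateFrom_of_mem ⟨I, rfl⟩)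

lemma exists_forall_le_of_compactSpace {S : Set (QIdeal Q)} (hcompact : @CompactSpace ↥S (qTop S))
    {ι : Type*} (I : ι → QIdeal Q) (hfin : ∀ u : Finset ι, ∃ J ∈ S, ∀ i ∈ u, I i ≤ J) :
    ∃ J ∈ S, ∀ i, I i ≤ J := by
  let := qTop S
  obtain ⟨⟨J, hJS⟩, -, hJ⟩ := isCompact_univ.inter_iInter_nonempty (fun i => up S (I i))
    (fun i => isClosed_up S (I i)) fun u => by
      obtain ⟨J, hJS, hJ⟩ := hfin u
      exact ⟨⟨J, hJS⟩, trivial, Set.mem_iInter₂.2 fun i hi => hJ i hi⟩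
  exact ⟨J, hJS, fun i => Set.mem_iInter.1 hJ i⟩

theorem stmt6 [CommMonoid Q] [IsQuantale Q] (htop : (1 : Q) = ⊤) (S : Set (QIdeal Q))
    (hS : S = {I : QIdeal Q | IsFG I ∧ I.IsProper})
    (hcompact : @CompactSpace ↥S (qTop S)) :
    ∀ M : QIdeal Q, M.IsMaximal → M ∈ S := by
  intro M hM
  subst hS
  have hfin (u : Finset M) : ∃ J ∈ {I : QIdeal Q | IsFG I ∧ I.IsProper}, ∀ x ∈ u, princ x.1 ≤ J := by
    obtain ⟨b, hbM, hub⟩ := M.exists_mem_forall_le_of_finset u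
    refine ⟨princ b, ⟨isFG_princ htop b, isProper_princ_iff.2 ?_⟩, fun x hx => ?_⟩
    · rintro rfl
      exact hM.1 hbM
    · exact princ_le_iff.2 (hub x hx)
  obtain ⟨J, ⟨hJfg, hJ⟩, hMJ⟩ := exists_forall_le_of_compactSpace hcompact _ hfin
  have hJM : J = M := hM.2 J hJ fun x hx => princ_le_iff.1 (hMJ ⟨x, hx⟩)
  exact hJM ▸ ⟨hJfg, hJ⟩

end QuantalePaper
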